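/- Every continuous group homomorphism α from the additive group (ℂ, +) to the multiplicative group (ℂ*, ×) is of the form α(z) = exp(a·z + b·z̄) for unique complex numbers a, b, where z̄ denotes complex conjugation. -/

import Mathlib

/-!
Restricted to the real and imaginary axes, α gives two continuous homomorphisms ℝ → ℂ*,
and each is t ↦ exp (t c): with F t = ∫₀ᵗ φ and δ such that F δ ≠ 0, the functional equation
gives φ t · F δ = F (t + δ) - F t, so φ is differentiable with φ' = φ · c for a constant c.
Then α z = exp (re z · c₁ + im z · c₂), and re z, im z are linear combinations of z and z̄.
Uniqueness follows by differentiating t ↦ exp (t c) at 0.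
-/

open Complex intervalIntegral

section ContinuousMultiplicative

variable {φ : ℝ → ℂ}

lemma exists_hasDerivAt_mul_of_continuous_of_map_add (hφ : Continuous φ) (h0 : φ 0 = 1)
    (hadd : ∀ s t, φ (s + t) = φ s * φ t) : ∃ c, ∀ t, HasDerivAt φ (φ t * c) t := by
  set F : ℝ → ℂ := fun t => ∫ s in 0..t, φ s
  have hF (t : ℝ) : HasDerivAt F (φ t) t := (hφ.integral_hasStrictDerivAt 0 t).hasDerivAt
  -- F' 0 = φ 0 = 1, so F does not vanish on a punctured neighbourhood of 0
  obtain ⟨δ, hδ⟩ : ∃ δ, F δ ≠ 0 := ((hF 0).eventually_ne (c := 0) (by simp [h0])).exists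
  have hshift (t : ℝ) : F (t + δ) - F t = F δ * φ t :=
    calc F (t + δ) - F t = ∫ s in t..t + δ, φ s :=
          integral_interval_sub_left (hφ.intervalIntegrable _ _) (hφ.intervalIntegrable _ _)
      _ = ∫ s in 0..δ, φ (s + t) := by rw [integral_comp_add_right, zero_add, add_comm]
      _ = F δ * φ t := by simp_rw [hadd]; exact integral_mul_const _ _
  have hφF : φ = fun t => (F (t + δ) - F t) / F δ := by
    funext t; rw [hshift]; field_simp
  refine ⟨(φ δ - 1) / F δ, fun t => ?_⟩
  have hd : HasDerivAt (fun t => (F (t + δ) - F t) / F δ) ((φ (t + δ) - φ t) / F δ) t :=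
    (((hF (t + δ)).comp_add_const t δ).sub (hF t)).div_const (F δ)
  rw [← hφF, hadd] at hd
  convert hd using 1
  ring

lemma eq_mul_exp_of_hasDerivAt_mul {c : ℂ} (hφ : ∀ t, HasDerivAt φ (φ t * c) t) (t : ℝ) :
    φ t = φ 0 * exp (t * c) := by
  have hexp (u : ℝ) : HasDerivAt (fun u : ℝ => exp (-(u * c))) (exp (-(u * c)) * -c) u :=
    (hasDerivAt_mul_const c).neg.cexp.comp_ofReal
  have hg (u : ℝ) : HasDerivAt (fun u => φ u * exp (-(u * c))) 0 u :=
    ((hφ u).mul (hexp u)).congr_deriv (by ring)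
  have hconst := is_const_of_deriv_eq_zero (fun u => (hg u).differentiableAt)
    (fun u => (hg u).deriv) t 0
  simp only [ofReal_zero, zero_mul, neg_zero, exp_zero, mul_one] at hconst
  rw [← hconst, mul_assoc, ← exp_add, neg_add_cancel, exp_zero, mul_one]

lemma exists_eq_exp_mul_of_continuous_of_map_add (hφ : Continuous φ) (h0 : φ 0 = 1)
    (hadd : ∀ s t, φ (s + t) = φ s * φ t) : ∃ c, ∀ t, φ t = exp (t * c) := by
  obtain ⟨c, hc⟩ := exists_hasDerivAt_mul_of_continuous_of_map_add hφ h0 hadd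
  exact ⟨c, fun t => by rw [eq_mul_exp_of_hasDerivAt_mul hc, h0, one_mul]⟩

end ContinuousMultiplicative

lemma eq_of_forall_exp_ofReal_mul_eq {c c' : ℂ} (h : ∀ t : ℝ, exp (t * c) = exp (t * c')) :
    c = c' := by
  have hd (c : ℂ) : HasDerivAt (fun t : ℝ => exp (t * c)) c 0 := by
    simpa using ((hasDerivAt_mul_const c).cexp (x := ((0 : ℝ) : ℂ))).comp_ofReal
  exact (hd c).unique (funext h ▸ hd c')

lemma mul_add_mul_conj_eq (a b z : ℂ) :
    a * z + b * starRingEnd ℂ z = z.re * (a + b) + z.im * (I * (a - b)) := by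
  conv_lhs => rw [← re_add_im z, map_add, map_mul, conj_ofReal, conj_ofReal, conj_I]
  ring

/-- Every continuous group homomorphism from (ℂ, +) to (ℂ*, ×) is of the form
z ↦ exp(a z + b z̄) for unique a, b ∈ ℂ. -/
theorem continuous_character_of_complex
    (α : ℂ → ℂ)
    (hne : ∀ z, α z ≠ 0)
    (hhom : ∀ z w, α (z + w) = α z * α w)
    (hcont : Continuous α) :
    ∃! ab : ℂ × ℂ, ∀ z, α z = Complex.exp (ab.1 * z + ab.2 * (starRingEnd ℂ z)) := by
  have hα0 : α 0 = 1 := (mul_eq_left₀ (hne 0)).mp (by rw [← hhom, add_zero])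
  obtain ⟨c₁, hc₁⟩ := exists_eq_exp_mul_of_continuous_of_map_add (φ := fun t : ℝ => α t)
    (by fun_prop) (by simpa using hα0) (fun s t => by simpa using hhom s t)
  obtain ⟨c₂, hc₂⟩ := exists_eq_exp_mul_of_continuous_of_map_add (φ := fun t : ℝ => α (t * I))
    (by fun_prop) (by simpa using hα0) (fun s t => by simpa [add_mul] using hhom (s * I) (t * I))
  have hα (z : ℂ) : α z = exp (z.re * c₁ + z.im * c₂) := by
    rw [exp_add, ← hc₁, ← hc₂, ← hhom, re_add_im]
  refine ⟨((c₁ - I * c₂) / 2, (c₁ + I * c₂) / 2), fun z => ?_, fun ⟨a, b⟩ hab => ?_⟩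
  · rw [hα, mul_add_mul_conj_eq]
    congr 3 <;> dsimp only
    · ring
    · linear_combination c₂ * I_sq
  · replace hab (z : ℂ) : α z = exp (z.re * (a + b) + z.im * (I * (a - b))) := by
      rw [hab, mul_add_mul_conj_eq]
    have h₁ : a + b = c₁ := eq_of_forall_exp_ofReal_mul_eq fun t => by rw [← hc₁, hab]; simp
    have h₂ : I * (a - b) = c₂ :=
      eq_of_forall_exp_ofReal_mul_eq fun t => by rw [← hc₂, hab]; simp
    ext <;> dsimp only
    · linear_combination h₁ / 2 - I * h₂ / 2 + (a - b) / 2 * I_sq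
    · linear_combination h₁ / 2 + I * h₂ / 2 - (a - b) / 2 * I_sq
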